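/- arXiv:1809.08127 — 4 statements merged into one kernel-verified Lean document; each statement's English description precedes it below -/
import Mathlib

section
/- Let A be a real symmetric positive definite n×n matrix. Then the system of strict linear inequalities A z > 0, z > 0 (component-wise) is feasible, i.e., there exists z ∈ ℝⁿ with all components positive such that all components of A z are positive. -/
/-!
Minimise the quadratic form `Q z = z ⬝ᵥ A *ᵥ z` over the standard simplex. At a minimiser `x`,
moving towards the vertex `eᵢ` cannot decrease `Q`, and since `A` is symmetric the first-order
term of that move is `2 ((A *ᵥ x) i - Q x)`; hence `(A *ᵥ x) i ≥ Q x > 0` for every `i`.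
As `x ≥ 0`, the vector `x + ε • 1` is positive, and for small `ε > 0` it still satisfies
`A *ᵥ (x + ε • 1) > 0`.
-/

open Filter Topology Set

namespace Matrix

variable {ι κ : Type*} [Fintype ι]

lemma dotProduct_mulVec_add_smul_self {A : Matrix ι ι ℝ} (hA : Aᵀ = A) (x d : ι → ℝ) (t : ℝ) :
    (x + t • d) ⬝ᵥ A *ᵥ (x + t • d) =
      x ⬝ᵥ A *ᵥ x + 2 * t * (d ⬝ᵥ A *ᵥ x) + t ^ 2 * (d ⬝ᵥ A *ᵥ d) := by
  have hcomm : x ⬝ᵥ A *ᵥ d = d ⬝ᵥ A *ᵥ x := by rw [← dotProduct_transpose_mulVec, hA]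
  simp only [mulVec_add, mulVec_smul, dotProduct_add, add_dotProduct, dotProduct_smul,
    smul_dotProduct, smul_eq_mul, hcomm]
  ring

lemma dotProduct_mulVec_le_of_isMinOn {A : Matrix ι ι ℝ} (hA : Aᵀ = A) {s : Set (ι → ℝ)}
    (hs : Convex ℝ s) {x y : ι → ℝ} (hx : x ∈ s) (hy : y ∈ s)
    (hmin : IsMinOn (fun z => z ⬝ᵥ A *ᵥ z) s x) :
    x ⬝ᵥ A *ᵥ x ≤ y ⬝ᵥ A *ᵥ x := by
  set a := (y - x) ⬝ᵥ A *ᵥ x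
  set b := (y - x) ⬝ᵥ A *ᵥ (y - x)
  have hsegment : ∀ t ∈ Ioc (0 : ℝ) 1, 0 ≤ 2 * a + t * b := by
    rintro t ⟨ht₀, ht₁⟩
    have hle : x ⬝ᵥ A *ᵥ x ≤ (x + t • (y - x)) ⬝ᵥ A *ᵥ (x + t • (y - x)) :=
      hmin (hs.add_smul_sub_mem hx hy ⟨ht₀.le, ht₁⟩)
    rw [dotProduct_mulVec_add_smul_self hA] at hle
    nlinarith
  have hlim : Tendsto (fun t : ℝ => 2 * a + t * b) (𝓝[>] 0) (𝓝 (2 * a)) := by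
    have hcont : Continuous fun t : ℝ => 2 * a + t * b := by fun_prop
    simpa using (hcont.tendsto 0).mono_left nhdsWithin_le_nhds
  have ha : 0 ≤ 2 * a := ge_of_tendsto hlim (eventually_of_mem (Ioc_mem_nhdsGT one_pos) hsegment)
  rw [← sub_nonneg, ← sub_dotProduct]
  linarith

lemma PosDef.exists_nonneg_mulVec_pos {A : Matrix ι ι ℝ} (hA : A.PosDef) :
    ∃ x, 0 ≤ x ∧ ∀ i, 0 < (A *ᵥ x) i := by
  classical
  cases isEmpty_or_nonempty ι
  · exact ⟨0, le_rfl, isEmptyElim⟩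
  have hsymm : Aᵀ = A := (conjTranspose_eq_transpose_of_trivial A).symm.trans hA.isHermitian
  have hcont : Continuous fun z : ι → ℝ => z ⬝ᵥ A *ᵥ z := by fun_prop
  obtain ⟨x, hx, hmin⟩ := (isCompact_stdSimplex ℝ ι).exists_isMinOn
    ⟨_, single_mem_stdSimplex ℝ (Classical.arbitrary ι)⟩ hcont.continuousOn
  have hx₀ : x ≠ 0 := by
    rintro rfl
    simpa using hx.2
  refine ⟨x, hx.1, fun i => ?_⟩
  calc 0 < x ⬝ᵥ A *ᵥ x := by simpa using hA.dotProduct_mulVec_pos hx₀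
    _ ≤ Pi.single i 1 ⬝ᵥ A *ᵥ x :=
      dotProduct_mulVec_le_of_isMinOn hsymm (convex_stdSimplex ℝ ι) hx
        (single_mem_stdSimplex ℝ i) hmin
    _ = (A *ᵥ x) i := by rw [single_dotProduct, one_mul]

lemma exists_pos_mulVec_pos_of_nonneg [Finite κ] {A : Matrix κ ι ℝ} {x : ι → ℝ} (hx : 0 ≤ x)
    (hAx : ∀ i, 0 < (A *ᵥ x) i) : ∃ z, (∀ j, 0 < z j) ∧ ∀ i, 0 < (A *ᵥ z) i := by
  have hcont : Continuous fun ε : ℝ => A *ᵥ (x + ε • 1) := by fun_prop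
  have hnear : ∀ᶠ ε in 𝓝 (0 : ℝ), ∀ i, 0 < (A *ᵥ (x + ε • 1)) i :=
    eventually_all.2 fun i => ((continuous_apply i).comp hcont).tendsto 0 |>.eventually_const_lt
      (by simpa using hAx i)
  obtain ⟨ε, hpos, hε⟩ := ((hnear.filter_mono nhdsWithin_le_nhds).and
    (self_mem_nhdsWithin : Ioi (0 : ℝ) ∈ 𝓝[>] 0)).exists
  exact ⟨x + ε • 1, fun j => by simpa using add_pos_of_nonneg_of_pos (hx j) hε, hpos⟩

end Matrix

theorem stmt_0_general (n : ℕ) (A : Matrix (Fin n) (Fin n) ℝ)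
    (hpd : A.PosDef) :
    ∃ z : Fin n → ℝ, (∀ i, 0 < z i) ∧ ∀ i, 0 < A.mulVec z i := by
  obtain ⟨x, hx, hAx⟩ := hpd.exists_nonneg_mulVec_pos
  exact Matrix.exists_pos_mulVec_pos_of_nonneg hx hAx

theorem stmt_0 (n : ℕ) (A : Matrix (Fin n) (Fin n) ℝ)
    (hsymm : A.IsSymm) (hpd : A.PosDef) :
    ∃ z : Fin n → ℝ, (∀ i, 0 < z i) ∧ ∀ i, 0 < A.mulVec z i :=
  stmt_0_general n A hpd
end

section
/- Let A = Aᵀ be a nonsingular real symmetric n×n matrix with nonnegative off-diagonal entries. If every vector h ∈ ℝⁿ with A h > 0 (component-wise strict) satisfies h ≤ 0 (component-wise), then A is Hurwitz, i.e., all eigenvalues of A are negative reals. -/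
/-!
Suppose `μ ≥ 0` were an eigenvalue with eigenvector `v`. Because the off-diagonal entries are
nonnegative, `A |v| ≥ μ |v| ≥ 0` entrywise. With `u := A⁻¹ 1`, the vector `h := s |v| + u` satisfies
`A h = s A |v| + 1 > 0` for every `s ≥ 0`, and for `s` large `h` is positive wherever `v` is
nonzero, contradicting the hypothesis that `A h > 0` forces `h ≤ 0`.
-/

open Matrix SignType

namespace Matrix

variable {ι R : Type*} [Fintype ι]

def IsMetzler [Zero R] [LE R] (A : Matrix ι ι R) : Prop :=
  ∀ i j, i ≠ j → 0 ≤ A i j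

section LinearOrderedRing

variable [CommRing R] [LinearOrder R] [IsStrictOrderedRing R] {A : Matrix ι ι R}

theorem IsMetzler.sign_mul_mulVec_le_mulVec_abs (hA : A.IsMetzler) (v : ι → R) (i : ι) :
    sign (v i) * (A *ᵥ v) i ≤ (A *ᵥ |v|) i := by
  simp only [mulVec, dotProduct, Finset.mul_sum, Pi.abs_apply]
  refine Finset.sum_le_sum fun j _ => ?_
  rcases eq_or_ne i j with rfl | hij
  · rw [mul_left_comm, sign_mul_self]
  · have hsign : (sign (v i) : R) * v j ≤ |v j| := by
      rcases lt_trichotomy (v i) 0 with hvi | hvi | hvi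
      · simpa [sign_neg hvi] using neg_le_abs (v j)
      · simp [hvi]
      · simpa [sign_pos hvi] using le_abs_self (v j)
    rw [mul_left_comm]
    exact mul_le_mul_of_nonneg_left hsign (hA i j hij)

theorem IsMetzler.smul_abs_le_mulVec_abs (hA : A.IsMetzler) {μ : R} {v : ι → R}
    (hv : A *ᵥ v = μ • v) : μ • |v| ≤ A *ᵥ |v| := fun i => by
  simpa [hv, mul_left_comm _ μ, sign_mul_self] using hA.sign_mul_mulVec_le_mulVec_abs v i

end LinearOrderedRing

/-- Adding `A⁻¹ 1` to a large multiple of `w` makes `A w ≥ 0` strict while keeping `w i₀ > 0`. -/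
theorem exists_mulVec_pos_of_mulVec_nonneg [DecidableEq ι] [Field R] [LinearOrder R]
    [IsStrictOrderedRing R] {A : Matrix ι ι R} (hA : IsUnit A.det) {w : ι → R}
    (hAw : 0 ≤ A *ᵥ w) {i₀ : ι} (hi₀ : 0 < w i₀) :
    ∃ h : ι → R, (∀ i, 0 < (A *ᵥ h) i) ∧ 0 < h i₀ := by
  set u := A⁻¹ *ᵥ 1
  have hAu : A *ᵥ u = 1 := by
    rw [mulVec_mulVec, mul_nonsing_inv A hA, one_mulVec]
  set s := (|u i₀| + 1) / w i₀
  have hs : 0 ≤ s := by positivity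
  refine ⟨s • w + u, fun i => ?_, ?_⟩
  · have hAwi : 0 ≤ (A *ᵥ w) i := hAw i
    simp only [mulVec_add, mulVec_smul, hAu, Pi.add_apply, Pi.smul_apply, Pi.one_apply,
      smul_eq_mul]
    nlinarith
  · have hswi : s * w i₀ = |u i₀| + 1 := div_mul_cancel₀ _ hi₀.ne'
    simp only [Pi.add_apply, Pi.smul_apply, smul_eq_mul, hswi]
    linarith [neg_abs_le (u i₀)]

end Matrix

theorem stmt_3_general (n : ℕ) (A : Matrix (Fin n) (Fin n) ℝ)
    (hdet : A.det ≠ 0)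
    (hoff : ∀ i j, i ≠ j → 0 ≤ A i j)
    (hfp : ∀ h : Fin n → ℝ, (∀ i, 0 < A.mulVec h i) → ∀ i, h i ≤ 0) :
    ∀ μ : ℝ, Module.End.HasEigenvalue (Matrix.toLin' A) μ → μ < 0 := by
  intro μ hμ
  by_contra! hμ0
  obtain ⟨v, hv⟩ := hμ.exists_hasEigenvector
  have hAv : A *ᵥ v = μ • v := by simpa [toLin'_apply] using hv.apply_eq_smul
  have hAabs : 0 ≤ A *ᵥ |v| :=
    (smul_nonneg hμ0 (abs_nonneg v)).trans (IsMetzler.smul_abs_le_mulVec_abs hoff hAv)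
  obtain ⟨i₀, hi₀⟩ : ∃ i, v i ≠ 0 := Function.ne_iff.mp hv.2
  obtain ⟨h, hAh, hpos⟩ := exists_mulVec_pos_of_mulVec_nonneg hdet.isUnit hAabs
    (abs_pos.mpr hi₀)
  exact (hfp h hAh i₀).not_gt hpos

theorem stmt_3 (n : ℕ) (A : Matrix (Fin n) (Fin n) ℝ)
    (hsymm : A.IsSymm) (hdet : A.det ≠ 0)
    (hoff : ∀ i j, i ≠ j → 0 ≤ A i j)
    (hfp : ∀ h : Fin n → ℝ, (∀ i, 0 < A.mulVec h i) → ∀ i, h i ≤ 0) :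
    ∀ μ : ℝ, Module.End.HasEigenvalue (Matrix.toLin' A) μ → μ < 0 :=
  stmt_3_general n A hdet hoff hfp
end

section
/- Suppose b > 0, W > 0, and a continuously differentiable function x : [t, τ) → (0, ∞) satisfies ẋ(s) ≤ -b/(2 x(s)) whenever x(s) ≤ b/(2W), and x(t) ≤ b/(2W). Then for all θ ∈ [t, τ), x(θ)² ≤ x(t)² - b (θ - t). In particular τ - t ≤ x(t)²/b, i.e., x reaches (approaches) 0 in finite time. -/
/-!
While `x ≤ b/(2W)` the derivative is negative, so `x` can never climb back above the level
`b/(2W)` once it starts below it. On that region `(x²)' = 2 x ẋ ≤ -b`, so `x² + b s` decreases,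
and positivity of `x²` forces the interval to have length at most `x(t)²/b`.
-/

open Set

theorem le_of_hasDerivAt_neg_of_eq {f f' : ℝ → ℝ} {a b c : ℝ}
    (hf : ∀ s ∈ Ico a b, HasDerivAt f (f' s) s) (ha : f a ≤ c)
    (hc : ∀ s ∈ Ico a b, f s = c → f' s < 0) : ∀ s ∈ Ico a b, f s ≤ c := by
  intro θ hθ
  have hsub : Icc a θ ⊆ Ico a b := Icc_subset_Ico_right hθ.2
  have hsub' : Ico a θ ⊆ Ico a b := Ico_subset_Icc_self.trans hsub
  exact image_le_of_deriv_right_lt_deriv_boundary (B := fun _ => c) (B' := 0)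
    (fun s hs => (hf s (hsub hs)).continuousAt.continuousWithinAt)
    (fun s hs => (hf s (hsub' hs)).hasDerivWithinAt) ha (fun _ => hasDerivAt_const _ _)
    (fun s hs => hc s (hsub' hs)) ⟨hθ.1, le_rfl⟩

theorem le_add_mul_sub_of_hasDerivAt_le {f f' : ℝ → ℝ} {a b C : ℝ}
    (hf : ∀ s ∈ Ico a b, HasDerivAt f (f' s) s) (hC : ∀ s ∈ Ico a b, f' s ≤ C) :
    ∀ s ∈ Ico a b, f s ≤ f a + C * (s - a) := by
  intro θ hθ
  have hsub : Icc a θ ⊆ Ico a b := Icc_subset_Ico_right hθ.2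
  have hsub' : Ico a θ ⊆ Ico a b := Ico_subset_Icc_self.trans hsub
  have hB : ∀ s, HasDerivAt (fun s => f a + C * (s - a)) C s := fun s => by
    simpa using ((hasDerivAt_id s).sub_const a).const_mul C |>.const_add (f a)
  exact image_le_of_deriv_right_le_deriv_boundary
    (fun s hs => (hf s (hsub hs)).continuousAt.continuousWithinAt)
    (fun s hs => (hf s (hsub' hs)).hasDerivWithinAt) (by simp)
    (fun s _ => (hB s).continuousAt.continuousWithinAt) (fun s _ => (hB s).hasDerivWithinAt)
    (fun s hs => hC s (hsub' hs)) ⟨hθ.1, le_rfl⟩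

theorem sq_le_sq_sub_mul_of_deriv_le_neg_div {x x' : ℝ → ℝ} {b t τ : ℝ}
    (hpos : ∀ s ∈ Ico t τ, 0 < x s) (hderiv : ∀ s ∈ Ico t τ, HasDerivAt x (x' s) s)
    (hx' : ∀ s ∈ Ico t τ, x' s ≤ -b / (2 * x s)) :
    ∀ θ ∈ Ico t τ, x θ ^ 2 ≤ x t ^ 2 - b * (θ - t) := by
  have hsq : ∀ s ∈ Ico t τ, HasDerivAt (fun s => x s ^ 2) (2 * x s * x' s) s := fun s hs =>
    ((hderiv s hs).pow 2).congr_deriv (by ring)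
  have hslope : ∀ s ∈ Ico t τ, 2 * x s * x' s ≤ -b := fun s hs => by
    have hxs := hpos s hs
    calc 2 * x s * x' s ≤ 2 * x s * (-b / (2 * x s)) := by gcongr; exact hx' s hs
      _ = -b := by field_simp
  intro θ hθ
  linarith [le_add_mul_sub_of_hasDerivAt_le hsq hslope θ hθ]

theorem stmt_13_general (b W t τ : ℝ) (hb : 0 < b)
    (x x' : ℝ → ℝ)
    (hpos : ∀ s ∈ Set.Ico t τ, 0 < x s)
    (hderiv : ∀ s ∈ Set.Ico t τ, HasDerivAt x (x' s) s)
    (hineq : ∀ s ∈ Set.Ico t τ, x s ≤ b / (2 * W) → x' s ≤ -b / (2 * x s))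
    (hinit : x t ≤ b / (2 * W)) :
    (∀ θ ∈ Set.Ico t τ, x θ ^ 2 ≤ x t ^ 2 - b * (θ - t)) ∧ τ - t ≤ x t ^ 2 / b := by
  have hstay : ∀ s ∈ Ico t τ, x s ≤ b / (2 * W) :=
    le_of_hasDerivAt_neg_of_eq hderiv hinit fun s hs hxs =>
      (hineq s hs hxs.le).trans_lt (div_neg_of_neg_of_pos (by linarith) (by linarith [hpos s hs]))
  have hsq := sq_le_sq_sub_mul_of_deriv_le_neg_div hpos hderiv fun s hs => hineq s hs (hstay s hs)
  refine ⟨hsq, ?_⟩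
  by_contra! hlong
  have ht : 0 ≤ x t ^ 2 / b := by positivity
  have hθ : t + x t ^ 2 / b ∈ Ico t τ := ⟨by linarith, by linarith⟩
  have hcollapse : x t ^ 2 - b * (t + x t ^ 2 / b - t) = 0 := by field_simp; ring
  nlinarith [hsq _ hθ, hpos _ hθ]

theorem stmt_13 (b W t τ : ℝ) (hb : 0 < b) (hW : 0 < W) (htτ : t < τ)
    (x x' : ℝ → ℝ)
    (hpos : ∀ s ∈ Set.Ico t τ, 0 < x s)
    (hderiv : ∀ s ∈ Set.Ico t τ, HasDerivAt x (x' s) s)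
    (hineq : ∀ s ∈ Set.Ico t τ, x s ≤ b / (2 * W) → x' s ≤ -b / (2 * x s))
    (hinit : x t ≤ b / (2 * W)) :
    (∀ θ ∈ Set.Ico t τ, x θ ^ 2 ≤ x t ^ 2 - b * (θ - t)) ∧ τ - t ≤ x t ^ 2 / b :=
  stmt_13_general b W t τ hb x x' hpos hderiv hineq hinit
end

section
/- Let A ∈ ℝ^{n×n} be symmetric positive definite with non-positive off-diagonal entries, b, w ∈ ℝⁿ, and suppose y > 0 satisfies (A y)_i > ⟨w_i⟩ + ⟨-b_i⟩/y_i + 3δ for all i and some δ > 0. Then there exists θ ∈ (0, 1) such that for any x with 0 < x ≤ y component-wise and max_i x_i/y_i = ρ ≥ θ, every index i achieving the maximum (x_i = ρ y_i) satisfies f(x)_i ≤ -δ ρ, where f(x)_i = -(Ax)_i - b_i/x_i + w_i. -/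
/-!
Fix a maximizing index `i`, so `x i = ρ * y i` and `x ≤ ρ • y`. Since the off-diagonal entries of `A`
are non-positive, `(A x)_i ≥ ρ (A y)_i`, and `-b_i / x_i ≤ ⟨-b_i⟩ / (ρ y_i)`. Inserting the
hypothesis on `A y` leaves the requirement `(1 - ρ) ⟨w_i⟩ + (ρ⁻¹ - ρ) ⟨-b_i⟩ / y_i ≤ 2 δ ρ`. Its two
sides are `0` and `2 δ` at `ρ = 1`, so it holds on a left neighbourhood of `1`, uniformly in the
finitely many indices, and the left-hand side decreases in `ρ`, so it persists for all `ρ ≥ θ`.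
-/

open Filter Topology Set

theorem Matrix.mul_mulVec_apply_le_of_offDiag_nonpos {ι R : Type*} [Fintype ι] [CommRing R]
    [PartialOrder R] [IsOrderedRing R] {A : Matrix ι ι R} (hA : ∀ i j, i ≠ j → A i j ≤ 0)
    {x y : ι → R} {ρ : R} {i : ι} (hx : ∀ j, x j ≤ ρ * y j) (hxi : x i = ρ * y i) :
    ρ * A.mulVec y i ≤ A.mulVec x i := by
  simp only [Matrix.mulVec, dotProduct, Finset.mul_sum]
  refine Finset.sum_le_sum fun j _ => ?_
  rcases eq_or_ne j i with rfl | hji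
  · rw [hxi, mul_left_comm]
  · calc ρ * (A i j * y j) = A i j * (ρ * y j) := mul_left_comm _ _ _
      _ ≤ A i j * x j := mul_le_mul_of_nonpos_left (hx j) (hA i j hji.symm)

theorem neg_div_le_max_neg_zero_div {b x y ρ : ℝ} (hρ : 0 < ρ) (hy : 0 < y) (hx : x = ρ * y) :
    -(b / x) ≤ ρ⁻¹ * (max (-b) 0 / y) := by
  rw [hx, ← neg_div, inv_mul_eq_div, div_div, mul_comm y]
  exact div_le_div_of_nonneg_right (le_max_left _ _) (mul_pos hρ hy).le

theorem exists_forall_ge_sub_mul_add_inv_sub_mul_le {ι : Type*} [Finite ι] {u v : ι → ℝ}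
    (hu : ∀ i, 0 ≤ u i) (hv : ∀ i, 0 ≤ v i) {c : ℝ} (hc : 0 < c) :
    ∃ θ ∈ Ioo (0 : ℝ) 1, ∀ ρ, θ ≤ ρ → ∀ i, (1 - ρ) * u i + (ρ⁻¹ - ρ) * v i ≤ c * ρ := by
  have hnear : ∀ᶠ θ in 𝓝 (1 : ℝ), ∀ i, (1 - θ) * u i + (θ⁻¹ - θ) * v i < c * θ := by
    refine eventually_all.2 fun i => ?_
    have hcont : ContinuousAt (fun θ : ℝ => (1 - θ) * u i + (θ⁻¹ - θ) * v i - c * θ) 1 := by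
      fun_prop (disch := norm_num)
    have hneg := hcont.eventually (gt_mem_nhds (a := -c / 2) (by norm_num; linarith))
    filter_upwards [hneg] with θ hθ
    linarith
  obtain ⟨θ, hθ, hθ01⟩ :=
    ((hnear.filter_mono nhdsWithin_le_nhds).and (Ioo_mem_nhdsLT (zero_lt_one' ℝ))).exists
  refine ⟨θ, hθ01, fun ρ hθρ i => ?_⟩
  have hθ0 : 0 < θ := hθ01.1
  have hdecr : (1 - ρ) * u i + (ρ⁻¹ - ρ) * v i - c * ρ
      ≤ (1 - θ) * u i + (θ⁻¹ - θ) * v i - c * θ := by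
    have := hu i; have := hv i
    gcongr
  linarith [hθ i]

theorem stmt_15_general (n : ℕ) (A : Matrix (Fin n) (Fin n) ℝ) (b w : Fin n → ℝ)
    (hoff : ∀ i j, i ≠ j → A i j ≤ 0)
    (δ : ℝ) (hδ : 0 < δ) (y : Fin n → ℝ) (hy : ∀ i, 0 < y i)
    (hchar : ∀ i, A.mulVec y i > max (w i) 0 + max (-(b i)) 0 / y i + 3 * δ) :
    ∃ θ ∈ Set.Ioo (0 : ℝ) 1,
      ∀ x : Fin n → ℝ, (∀ i, 0 < x i) → (∀ i, x i ≤ y i) →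
        ∀ ρ : ℝ, θ ≤ ρ → (∀ j, x j ≤ ρ * y j) →
          ∀ i, x i = ρ * y i →
            -(A.mulVec x i) - b i / x i + w i ≤ -δ * ρ := by
  obtain ⟨θ, hθ01, hθ⟩ := exists_forall_ge_sub_mul_add_inv_sub_mul_le
    (u := fun i => max (w i) 0) (v := fun i => max (-(b i)) 0 / y i)
    (fun _ => le_max_right _ _) (fun i => div_nonneg (le_max_right _ _) (hy i).le)
    (mul_pos two_pos hδ)
  refine ⟨θ, hθ01, fun x _ _ ρ hθρ hxρ i hxi => ?_⟩
  have hρ : 0 < ρ := hθ01.1.trans_le hθρ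
  have hAx := Matrix.mul_mulVec_apply_le_of_offDiag_nonpos hoff hxρ hxi
  have hbx := neg_div_le_max_neg_zero_div (b := b i) hρ (hy i) hxi
  have hAy := mul_le_mul_of_nonneg_left (hchar i).le hρ.le
  have hmargin := hθ ρ hθρ i
  have hw := le_max_left (w i) 0
  linarith

theorem stmt_15 (n : ℕ) (A : Matrix (Fin n) (Fin n) ℝ) (b w : Fin n → ℝ)
    (hsymm : A.IsSymm) (hpd : A.PosDef) (hoff : ∀ i j, i ≠ j → A i j ≤ 0)
    (δ : ℝ) (hδ : 0 < δ) (y : Fin n → ℝ) (hy : ∀ i, 0 < y i)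
    (hchar : ∀ i, A.mulVec y i > max (w i) 0 + max (-(b i)) 0 / y i + 3 * δ) :
    ∃ θ ∈ Set.Ioo (0 : ℝ) 1,
      ∀ x : Fin n → ℝ, (∀ i, 0 < x i) → (∀ i, x i ≤ y i) →
        ∀ ρ : ℝ, θ ≤ ρ → (∀ j, x j ≤ ρ * y j) →
          ∀ i, x i = ρ * y i →
            -(A.mulVec x i) - b i / x i + w i ≤ -δ * ρ :=
  stmt_15_general n A b w hoff δ hδ y hy hchar
end
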